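/- arXiv:1504.08310 — 5 statements merged into one kernel-verified Lean document; each statement's English description precedes it below -/
import Mathlib

section
/- Let κ be a nonzero complex number such that κ ≠ -p/q for all integers 1 ≤ p ≤ m and 1 ≤ q ≤ n. If complex numbers x_1,...,x_n, y_1,...,y_m satisfy κ(x_1^l + ... + x_n^l) + y_1^l + ... + y_m^l = 0 for all l = 1, ..., n+m, then all x_i and all y_j are zero. -/
open Finset

lemma vandermonde_aux (r : ℕ) (a : Fin r → ℂ) (ha : Function.Injective a)
    (ha0 : ∀ k, a k ≠ 0) (c : Fin r → ℂ)
    (hc : ∀ l : ℕ, 1 ≤ l → l ≤ r → ∑ k, c k * a k ^ l = 0) :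
    ∀ k, c k = 0 := by
  have hdet : (Matrix.vandermonde a).det ≠ 0 := by
    rw [Matrix.det_vandermonde]
    refine Finset.prod_ne_zero_iff.2 fun i _ => Finset.prod_ne_zero_iff.2 fun j hj => ?_
    have : i < j := Finset.mem_Ioi.1 hj
    exact sub_ne_zero.2 fun hij => absurd (ha hij) this.ne'
  have hw : Matrix.vecMul (fun k => c k * a k) (Matrix.vandermonde a) = 0 := by
    funext j
    have hj := hc ((j : ℕ) + 1) (Nat.succ_le_succ (Nat.zero_le _)) (Nat.succ_le_of_lt j.2)
    simp only [Matrix.vecMul, dotProduct, Matrix.vandermonde, Matrix.of_apply,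
      Pi.zero_apply]
    rw [← hj]
    exact Finset.sum_congr rfl fun k _ => by ring
  have hz := Matrix.eq_zero_of_vecMul_eq_zero hdet hw
  intro k
  have hk := congrFun hz k
  simp only [Pi.zero_apply] at hk
  rcases mul_eq_zero.1 hk with h | h
  · exact h
  · exact absurd h (ha0 k)

theorem only_zero_solution (n m : ℕ) (hn : 0 < n) (hm : 0 < m) (κ : ℂ) (hκ : κ ≠ 0)
    (hspec : ∀ p q : ℕ, 1 ≤ p → p ≤ m → 1 ≤ q → q ≤ n → κ ≠ -((p : ℂ) / (q : ℂ)))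
    (x : Fin n → ℂ) (y : Fin m → ℂ)
    (h : ∀ l : ℕ, 1 ≤ l → l ≤ n + m →
      κ * (∑ i, x i ^ l) + ∑ j, y j ^ l = 0) :
    (∀ i, x i = 0) ∧ (∀ j, y j = 0) := by
  classical
  set S : Finset ℂ := ((Finset.univ.image x ∪ Finset.univ.image y).filter (· ≠ 0)) with hS
  have hSne : ∀ a ∈ S, a ≠ 0 := fun a haS => (Finset.mem_filter.1 haS).2
  -- fiberwise sum identity
  have key : ∀ (k : ℕ) (z : Fin k → ℂ), (∀ i, z i ≠ 0 → z i ∈ S) → ∀ l : ℕ, 1 ≤ l →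
      ∑ i, z i ^ l
        = ∑ a ∈ S, ((Finset.univ.filter (fun i => z i = a)).card : ℂ) * a ^ l := by
    intro k z hz l hl
    have hmaps : ∀ i ∈ Finset.univ.filter (fun i => z i ≠ 0), z i ∈ S :=
      fun i hi => hz i (Finset.mem_filter.1 hi).2
    calc ∑ i, z i ^ l
        = ∑ i ∈ Finset.univ.filter (fun i => z i ≠ 0), z i ^ l := by
          rw [Finset.sum_filter]
          refine Finset.sum_congr rfl fun i _ => ?_
          by_cases h0 : z i = 0
          · simp [h0, zero_pow (Nat.one_le_iff_ne_zero.1 hl)]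
          · simp [h0]
      _ = ∑ a ∈ S, ∑ i ∈ (Finset.univ.filter (fun i => z i ≠ 0)).filter (fun i => z i = a),
            z i ^ l := (Finset.sum_fiberwise_of_maps_to hmaps _).symm
      _ = ∑ a ∈ S, ((Finset.univ.filter (fun i => z i = a)).card : ℂ) * a ^ l := by
          refine Finset.sum_congr rfl fun a ha => ?_
          rw [Finset.filter_filter]
          have hfe : Finset.univ.filter (fun i => z i ≠ 0 ∧ z i = a)
              = Finset.univ.filter (fun i => z i = a) := by
            refine Finset.filter_congr fun i _ => ?_
            constructor
            · exact fun hi => hi.2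
            · exact fun hi => ⟨hi ▸ hSne a ha, hi⟩
          rw [hfe, Finset.sum_congr rfl (fun i hi => by rw [(Finset.mem_filter.1 hi).2]),
            Finset.sum_const, nsmul_eq_mul]
  -- the combined coefficient vanishes on S
  have hcard : S.card ≤ n + m := by
    calc S.card ≤ (Finset.univ.image x ∪ Finset.univ.image y).card :=
          Finset.card_le_card (Finset.filter_subset _ _)
      _ ≤ (Finset.univ.image x).card + (Finset.univ.image y).card := Finset.card_union_le _ _
      _ ≤ n + m := by
          gcongr
          · exact (Finset.card_image_le).trans (by simp)
          · exact (Finset.card_image_le).trans (by simp)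
  set c : ℂ → ℂ := fun a =>
    κ * ((Finset.univ.filter (fun i => x i = a)).card : ℂ)
      + ((Finset.univ.filter (fun j => y j = a)).card : ℂ) with hc
  have hsum : ∀ l : ℕ, 1 ≤ l → l ≤ S.card → ∑ a ∈ S, c a * a ^ l = 0 := by
    intro l hl hls
    have hx : ∀ i : Fin n, x i ≠ 0 → x i ∈ S := fun i hi =>
      Finset.mem_filter.2 ⟨Finset.mem_union_left _ (Finset.mem_image_of_mem x (mem_univ i)), hi⟩
    have hy : ∀ j : Fin m, y j ≠ 0 → y j ∈ S := fun j hj =>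
      Finset.mem_filter.2 ⟨Finset.mem_union_right _ (Finset.mem_image_of_mem y (mem_univ j)), hj⟩
    have h1 := key n x hx l hl
    have h2 := key m y hy l hl
    have h3 := h l hl (hls.trans hcard)
    rw [h1, h2] at h3
    rw [← h3, Finset.mul_sum, ← Finset.sum_add_distrib]
    exact Finset.sum_congr rfl fun a _ => by rw [hc]; ring
  -- Vandermonde: c vanishes on S
  have hvanish : ∀ a ∈ S, c a = 0 := by
    intro a haS
    set e := S.equivFin with he
    have := vandermonde_aux S.card (fun k => ((e.symm k : S) : ℂ))
      (fun k₁ k₂ hk => e.symm.injective (Subtype.ext hk))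
      (fun k => hSne _ (e.symm k).2)
      (fun k => c ((e.symm k : S) : ℂ))
      (by
        intro l hl hls
        rw [← hsum l hl hls, ← Finset.sum_coe_sort S (fun a => c a * a ^ l)]
        exact Equiv.sum_comp e.symm (fun a : S => c (a : ℂ) * (a : ℂ) ^ l))
    have := this (e ⟨a, haS⟩)
    simpa using this
  -- use vanishing to conclude
  have hne : ∀ a ∈ S, c a ≠ 0 := by
    intro a haS
    set q := (Finset.univ.filter (fun i => x i = a)).card with hq
    set p := (Finset.univ.filter (fun j => y j = a)).card with hp
    have hqn : q ≤ n := by simpa using Finset.card_le_card (Finset.filter_subset _ (Finset.univ : Finset (Fin n)))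
    have hpm : p ≤ m := by simpa using Finset.card_le_card (Finset.filter_subset _ (Finset.univ : Finset (Fin m)))
    have hpos : 1 ≤ q ∨ 1 ≤ p := by
      have := (Finset.mem_filter.1 haS).1
      rcases Finset.mem_union.1 this with hmem | hmem
      · left
        obtain ⟨i, _, hi⟩ := Finset.mem_image.1 hmem
        exact Finset.card_pos.2 ⟨i, Finset.mem_filter.2 ⟨mem_univ i, hi⟩⟩
      · right
        obtain ⟨j, _, hj⟩ := Finset.mem_image.1 hmem
        exact Finset.card_pos.2 ⟨j, Finset.mem_filter.2 ⟨mem_univ j, hj⟩⟩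
    intro hca'
    have hca : κ * (q : ℂ) + (p : ℂ) = 0 := hca'
    clear hca'
    rcases Nat.eq_zero_or_pos q with hq0 | hq1
    · rw [hq0] at hca
      simp only [Nat.cast_zero, mul_zero, zero_add, Nat.cast_eq_zero] at hca
      rcases hpos with h1 | h1
      · omega
      · omega
    · rcases Nat.eq_zero_or_pos p with hp0 | hp1
      · rw [hp0] at hca
        simp only [Nat.cast_zero, add_zero, mul_eq_zero, Nat.cast_eq_zero] at hca
        rcases hca with h1 | h1
        · exact hκ h1
        · omega
      · refine hspec p q hp1 hpm hq1 hqn ?_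
        have hqC : (q : ℂ) ≠ 0 := Nat.cast_ne_zero.2 (by omega)
        field_simp
        linear_combination hca
  have hSempty : S = ∅ := by
    by_contra hne'
    obtain ⟨a, ha⟩ := Finset.nonempty_iff_ne_empty.2 hne'
    exact hne a ha (hvanish a ha)
  constructor
  · intro i
    by_contra hxi
    have : x i ∈ S := Finset.mem_filter.2
      ⟨Finset.mem_union_left _ (Finset.mem_image_of_mem x (mem_univ i)), hxi⟩
    rw [hSempty] at this
    exact absurd this (Finset.notMem_empty _)
  · intro j
    by_contra hyj
    have : y j ∈ S := Finset.mem_filter.2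
      ⟨Finset.mem_union_right _ (Finset.mem_image_of_mem y (mem_univ j)), hyj⟩
    rw [hSempty] at this
    exact absurd this (Finset.notMem_empty _)
end

section
/- Let P_1, ..., P_N be polynomials in N complex variables, and let P̄_i denote the top-degree homogeneous component of P_i. If the only common zero of P̄_1, ..., P̄_N in ℂ^N is the origin, then the system P_1(z) = ... = P_N(z) = 0 has only finitely many solutions in ℂ^N. -/
open MvPolynomial

private lemma fdeg_add {σ : Type*} (a b : σ →₀ ℕ) :
    (a + b).degree = a.degree + b.degree := by
  simp [Finsupp.degree_eq_weight_one, map_add]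

private lemma fdeg_sum {σ : Type*} (d : σ →₀ ℕ) :
    (d.sum fun _ e => e) = d.degree := rfl

/-- Homogeneous component of a product with a homogeneous polynomial. -/
private lemma hc_mul_homog {σ : Type*} (q p : MvPolynomial σ ℂ) {m : ℕ} (n : ℕ)
    (hp : p.IsHomogeneous m) (hmn : m ≤ n) :
    homogeneousComponent n (q * p) = homogeneousComponent (n - m) q * p := by
  classical
  ext α
  rw [coeff_homogeneousComponent, coeff_mul, coeff_mul]
  by_cases hα : α.degree = n
  · rw [if_pos hα]
    refine Finset.sum_congr rfl ?_
    rintro ⟨β, γ⟩ hβγ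
    rw [Finset.HasAntidiagonal.mem_antidiagonal] at hβγ
    by_cases hγ : coeff γ p = 0
    · simp [hγ]
    · have hγm : γ.degree = m := by
        by_contra hh; exact hγ (hp.coeff_eq_zero hh)
      have hβ : β.degree = n - m := by
        have hd : β.degree + γ.degree = α.degree := by rw [← fdeg_add, hβγ]
        omega
      rw [coeff_homogeneousComponent, if_pos hβ]
  · rw [if_neg hα]
    symm
    refine Finset.sum_eq_zero ?_
    rintro ⟨β, γ⟩ hβγ
    rw [Finset.HasAntidiagonal.mem_antidiagonal] at hβγ
    rw [coeff_homogeneousComponent]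
    by_cases hβ : β.degree = n - m
    · by_cases hγ : coeff γ p = 0
      · simp [hγ]
      · exfalso
        have hγm : γ.degree = m := by
          by_contra hh; exact hγ (hp.coeff_eq_zero hh)
        have hd : β.degree + γ.degree = α.degree := by rw [← fdeg_add, hβγ]
        omega
    · rw [if_neg hβ, zero_mul]

private lemma hc_mul_homog_zero {σ : Type*} (q p : MvPolynomial σ ℂ) {m : ℕ} (n : ℕ)
    (hp : p.IsHomogeneous m) (hmn : n < m) :
    homogeneousComponent n (q * p) = 0 := by
  classical
  ext α
  rw [coeff_homogeneousComponent, coeff_zero]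
  by_cases hα : α.degree = n
  · rw [if_pos hα, coeff_mul]
    refine Finset.sum_eq_zero ?_
    rintro ⟨β, γ⟩ hβγ
    rw [Finset.HasAntidiagonal.mem_antidiagonal] at hβγ
    by_cases hγ : coeff γ p = 0
    · simp [hγ]
    · exfalso
      have hγm : γ.degree = m := by
        by_contra hh; exact hγ (hp.coeff_eq_zero hh)
      have hd : β.degree + γ.degree = α.degree := by rw [← fdeg_add, hβγ]
      omega
  · rw [if_neg hα]

/-- Subtracting the top homogeneous component lowers the total degree. -/
private lemma totalDegree_sub_hc_le {σ : Type*} (f : MvPolynomial σ ℂ) (n : ℕ)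
    (hf : f.totalDegree ≤ n + 1) :
    (f - homogeneousComponent (n + 1) f).totalDegree ≤ n := by
  classical
  apply Finset.sup_le
  intro α hα
  rw [mem_support_iff] at hα
  rw [fdeg_sum]
  by_contra hgt
  push_neg at hgt
  apply hα
  rw [coeff_sub, coeff_homogeneousComponent]
  by_cases hd : α.degree = n + 1
  · rw [if_pos hd, sub_self]
  · have h2 : f.totalDegree < ∑ i ∈ α.support, α i := by
      have h3 : n + 1 < α.degree := by omega
      exact lt_of_le_of_lt hf h3
    rw [if_neg hd, coeff_eq_zero_of_totalDegree_lt h2, sub_zero]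

set_option maxHeartbeats 1000000 in
theorem affine_bezout_finiteness (N : ℕ) (P : Fin N → MvPolynomial (Fin N) ℂ)
    (h : ∀ z : Fin N → ℂ,
      (∀ i, eval z (homogeneousComponent (P i).totalDegree (P i)) = 0) → z = 0) :
    {z : Fin N → ℂ | ∀ i, eval z (P i) = 0}.Finite := by
  classical
  set Pb : Fin N → MvPolynomial (Fin N) ℂ :=
    fun i => homogeneousComponent (P i).totalDegree (P i) with hPb
  set I : Ideal (MvPolynomial (Fin N) ℂ) := Ideal.span (Set.range Pb) with hI
  set J : Ideal (MvPolynomial (Fin N) ℂ) := Ideal.span (Set.range P) with hJ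
  -- Step 1: each variable is in the radical of I (Nullstellensatz)
  have hXrad : ∀ j : Fin N, (X j : MvPolynomial (Fin N) ℂ) ∈ I.radical := by
    intro j
    rw [← MvPolynomial.vanishingIdeal_zeroLocus_eq_radical (K := ℂ)]
    rw [MvPolynomial.mem_vanishingIdeal_iff]
    intro x hx
    rw [hI, MvPolynomial.zeroLocus_span] at hx
    have hx0 : x = 0 := by
      apply h
      intro i
      exact hx (Pb i) ⟨i, rfl⟩
    rw [hx0]
    simp
  have hXpow : ∀ j : Fin N, ∃ k : ℕ, (X j : MvPolynomial (Fin N) ℂ) ^ (k + 1) ∈ I := by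
    intro j
    obtain ⟨k, hk⟩ := hXrad j
    exact ⟨k, by rw [pow_succ]; exact I.mul_mem_right _ hk⟩
  choose k hk using hXpow
  set D : ℕ := (∑ j, k j) + 1 with hD
  -- Step 2: every monomial of degree ≥ D is in I
  have hmono : ∀ (α : Fin N →₀ ℕ) (c : ℂ), D ≤ α.degree → monomial α c ∈ I := by
    intro α c hα
    have hj : ∃ j, k j + 1 ≤ α j := by
      by_contra hcon
      push_neg at hcon
      have hle : α.degree ≤ ∑ j, k j := by
        rw [Finsupp.degree]
        calc ∑ i ∈ α.support, α i ≤ ∑ i : Fin N, α i :=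
              Finset.sum_le_sum_of_subset (Finset.subset_univ _)
          _ ≤ ∑ j, k j := Finset.sum_le_sum fun i _ => by
              have := hcon i; omega
      omega
    obtain ⟨j, hj⟩ := hj
    have hle : Finsupp.single j (k j + 1) ≤ α := by
      rw [Finsupp.single_le_iff]
      exact hj
    have hsplit : monomial α c =
        (X j : MvPolynomial (Fin N) ℂ) ^ (k j + 1) *
          monomial (α - Finsupp.single j (k j + 1)) c := by
      rw [X_pow_eq_monomial, monomial_mul, one_mul,
        add_tsub_cancel_of_le hle]
    rw [hsplit]
    exact I.mul_mem_right _ (hk j)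
  -- Step 3: spanning lemma
  set M : Set (MvPolynomial (Fin N) ℂ) :=
    (fun α : Fin N →₀ ℕ => (monomial α (1 : ℂ))) '' {α | α.degree < D} with hM
  set W : Submodule ℂ (MvPolynomial (Fin N) ℂ) :=
    Submodule.span ℂ M ⊔ Submodule.restrictScalars ℂ J with hW
  have hlow : ∀ f : MvPolynomial (Fin N) ℂ, f.totalDegree < D → f ∈ Submodule.span ℂ M := by
    intro f hf
    nth_rewrite 1 [f.as_sum]
    apply Submodule.sum_mem
    intro α hα
    have heq : (monomial α (coeff α f)) = (coeff α f) • monomial α (1 : ℂ) := by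
      rw [smul_monomial, smul_eq_mul, mul_one]
    rw [heq]
    apply Submodule.smul_mem
    apply Submodule.subset_span
    refine ⟨α, ?_, rfl⟩
    have hle : α.degree ≤ f.totalDegree := by
      rw [← fdeg_sum]
      exact le_totalDegree hα
    exact lt_of_le_of_lt hle hf
  have hspan : ∀ (n : ℕ) (f : MvPolynomial (Fin N) ℂ), f.totalDegree ≤ n → f ∈ W := by
    intro n
    induction n with
    | zero =>
      intro f hf
      exact Submodule.mem_sup_left (hlow f (by omega))
    | succ n ih =>
      intro f hf
      rcases Nat.lt_or_ge f.totalDegree (n + 1) with h' | h'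
      · exact ih f (by omega)
      rcases Nat.lt_or_ge (n + 1) D with hD' | hD'
      · exact Submodule.mem_sup_left (hlow f (by omega))
      -- top component
      set g := homogeneousComponent (n + 1) f with hg
      have hgI : g ∈ I := by
        rw [hg, (homogeneousComponent (n + 1) f).as_sum]
        apply Ideal.sum_mem
        intro α hα
        apply hmono
        have hdα : α.degree = n + 1 := by
          rw [mem_support_iff] at hα
          by_contra hne
          exact hα ((homogeneousComponent_isHomogeneous (n + 1) f).coeff_eq_zero hne)
        omega
      rw [hI, Ideal.mem_span_range_iff_exists_fun] at hgI
      obtain ⟨c, hc⟩ := hgI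
      set c' : Fin N → MvPolynomial (Fin N) ℂ := fun i =>
        if (P i).totalDegree ≤ n + 1 then
          homogeneousComponent (n + 1 - (P i).totalDegree) (c i) else 0 with hc'
      have hgrep : g = ∑ i, c' i * Pb i := by
        have h1 : g = homogeneousComponent (n + 1) g := by
          rw [hg, homogeneousComponent_of_mem (homogeneousComponent_mem (n + 1) f), if_pos rfl]
        calc g = homogeneousComponent (n + 1) g := h1
          _ = homogeneousComponent (n + 1) (∑ i, c i * Pb i) := by rw [hc]
          _ = ∑ i, homogeneousComponent (n + 1) (c i * Pb i) := map_sum _ _ _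
          _ = ∑ i, c' i * Pb i := by
            refine Finset.sum_congr rfl fun i _ => ?_
            by_cases hdi : (P i).totalDegree ≤ n + 1
            · rw [hc']
              simp only [if_pos hdi]
              exact hc_mul_homog (c i) (Pb i) (n + 1)
                (homogeneousComponent_isHomogeneous _ _) hdi
            · rw [hc']
              simp only [if_neg hdi, zero_mul]
              exact hc_mul_homog_zero (c i) (Pb i) (n + 1)
                (homogeneousComponent_isHomogeneous _ _) (by omega)
      -- remainder has lower degree
      set r := (f - g) + ∑ i, c' i * (Pb i - P i) with hr
      have hrdeg : r.totalDegree ≤ n := by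
        apply le_trans (totalDegree_add _ _)
        apply max_le
        · exact totalDegree_sub_hc_le f n hf
        · apply le_trans (totalDegree_finset_sum _ _)
          apply Finset.sup_le
          intro i _
          by_cases hdi : (P i).totalDegree ≤ n + 1
          · rcases Nat.eq_zero_or_pos (P i).totalDegree with h0 | hpos
            · have hPbi : Pb i = P i := by
                rw [hPb]
                simp only [h0, homogeneousComponent_zero]
                have := (totalDegree_eq_zero_iff (Fin N) (P i)).mp h0
                ext β
                rw [coeff_C]
                by_cases hβ : β = 0
                · rw [if_pos hβ.symm, hβ]
                · rw [if_neg fun hh => hβ hh.symm]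
                  by_contra hne
                  apply hβ
                  ext x
                  exact this β (mem_support_iff.mpr fun hcc => hne (by rw [hcc])) x
              rw [hPbi, sub_self, mul_zero]
              simp
            · obtain ⟨m, hm⟩ : ∃ m, (P i).totalDegree = m + 1 :=
                ⟨(P i).totalDegree - 1, by omega⟩
              have h4 : (Pb i - P i).totalDegree ≤ m := by
                rw [hPb]
                simp only [hm]
                rw [← totalDegree_neg, neg_sub]
                exact totalDegree_sub_hc_le (P i) m (by omega)
              have h5 : (c' i).totalDegree ≤ n + 1 - (P i).totalDegree := by
                rw [hc']
                simp only [if_pos hdi]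
                exact IsHomogeneous.totalDegree_le (homogeneousComponent_isHomogeneous _ _)
              apply le_trans (totalDegree_mul _ _)
              have hmn : m + 1 ≤ n + 1 := by omega
              have : n + 1 - (P i).totalDegree + m ≤ n := by omega
              omega
          · rw [hc']
            simp only [if_neg hdi, zero_mul]
            simp
      have hfr : f = r + ∑ i, c' i * P i := by
        rw [hr]
        have hsum : ∑ i, c' i * (Pb i - P i) + ∑ i, c' i * P i = ∑ i, c' i * Pb i := by
          rw [← Finset.sum_add_distrib]
          exact Finset.sum_congr rfl fun i _ => by ring
        rw [add_assoc, hsum, ← hgrep]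
        ring
      rw [hfr]
      apply Submodule.add_mem
      · exact ih r hrdeg
      · exact Submodule.mem_sup_right
          (Ideal.sum_mem _ fun i _ => J.mul_mem_left _ (Ideal.subset_span ⟨i, rfl⟩))
  -- Step 4: the quotient is a finite-dimensional ℂ-module
  set mkA := Ideal.Quotient.mkₐ ℂ J with hmkA
  have hspanQ : Submodule.span ℂ (mkA '' M) = ⊤ := by
    show Submodule.span ℂ (mkA.toLinearMap '' M) = ⊤
    rw [Submodule.span_image]
    rw [eq_top_iff]
    rintro x -
    obtain ⟨f, rfl⟩ := Ideal.Quotient.mkₐ_surjective ℂ J x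
    have hf : f ∈ W := hspan f.totalDegree f le_rfl
    rw [hW, Submodule.mem_sup] at hf
    obtain ⟨a, ha, b, hb, rfl⟩ := hf
    rw [map_add]
    have hb0 : mkA b = 0 := by
      rw [hmkA, Ideal.Quotient.mkₐ_eq_mk, Ideal.Quotient.eq_zero_iff_mem]
      exact hb
    rw [hb0, add_zero]
    exact Submodule.mem_map_of_mem ha
  have hMfin : M.Finite := by
    apply Set.Finite.image
    exact (Finsupp.finite_of_degree_le D).subset
      fun α (hα : α.degree < D) => (le_of_lt hα : α.degree ≤ D)
  have hfinQ : Module.Finite ℂ (MvPolynomial (Fin N) ℂ ⧸ J) := by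
    rw [Module.finite_def, Submodule.fg_def]
    exact ⟨mkA '' M, hMfin.image _, hspanQ⟩
  -- Step 5: each coordinate is algebraic on the zero set
  have hint : ∀ j : Fin N, ∃ q : Polynomial ℂ,
      q ≠ 0 ∧ Polynomial.aeval (X j : MvPolynomial (Fin N) ℂ) q ∈ J := by
    intro j
    have hi : IsIntegral ℂ (mkA (X j)) := IsIntegral.of_finite ℂ _
    refine ⟨minpoly ℂ (mkA (X j)), minpoly.ne_zero hi, ?_⟩
    have hz : mkA (Polynomial.aeval (X j) (minpoly ℂ (mkA (X j)))) = 0 := by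
      rw [← Polynomial.aeval_algHom_apply]
      exact minpoly.aeval ℂ _
    rw [hmkA, Ideal.Quotient.mkₐ_eq_mk, Ideal.Quotient.eq_zero_iff_mem] at hz
    exact hz
  choose q hq0 hqJ using hint
  apply Set.Finite.subset
    (Set.Finite.pi fun j => Polynomial.finite_setOf_isRoot (hq0 j))
  intro z hz
  rw [Set.mem_pi]
  intro j _
  have hker : J ≤ RingHom.ker (eval z : MvPolynomial (Fin N) ℂ →+* ℂ) := by
    rw [hJ, Ideal.span_le]
    rintro _ ⟨i, rfl⟩
    exact RingHom.mem_ker.mpr (hz i)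
  have h0 : eval z (Polynomial.aeval (X j : MvPolynomial (Fin N) ℂ) (q j)) = 0 :=
    RingHom.mem_ker.mp (hker (hqJ j))
  have heval : eval z (Polynomial.aeval (X j : MvPolynomial (Fin N) ℂ) (q j))
      = (q j).eval (z j) := by
    have := Polynomial.aeval_algHom_apply (MvPolynomial.aeval z)
      (X j : MvPolynomial (Fin N) ℂ) (q j)
    rw [aeval_X] at this
    have haev : ∀ p : MvPolynomial (Fin N) ℂ, aeval z p = eval z p := fun p => by
      rw [MvPolynomial.aeval_def, Algebra.algebraMap_self]
      rfl
    rw [← Polynomial.coe_aeval_eq_eval, this]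
    exact (haev _).symm
  show (q j).IsRoot (z j)
  rw [Polynomial.IsRoot, ← heval, h0]
end

section
/- Let κ be a nonzero complex number. Suppose f, f̃ are monic polynomials of degree n and g̃ is the constant polynomial 1 (case m = 0), and f(t)·1 / (f(t+κ)·1) = f̃(t)/f̃(t+κ) as rational functions. Then f = f̃. -/
open Polynomial

theorem base_case_separation (n : ℕ) (κ : ℂ) (hκ : κ ≠ 0)
    (f ftilde : Polynomial ℂ) (hf : f.Monic) (hft : ftilde.Monic)
    (hdf : f.natDegree = n) (hdft : ftilde.natDegree = n)
    (h : f * ftilde.comp (X + C κ) = ftilde * f.comp (X + C κ)) :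
    f = ftilde := by
  induction n generalizing f ftilde with
  | zero =>
    rw [Polynomial.Monic.natDegree_eq_zero hf] at hdf
    rw [Polynomial.Monic.natDegree_eq_zero hft] at hdft
    rw [hdf, hdft]
  | succ n ih =>
    have hfne : f ≠ 0 := hf.ne_zero
    -- find a root α of f with α + κ not a root
    have hroot : ∃ α, f.IsRoot α ∧ ¬ f.IsRoot (α + κ) := by
      by_contra hcon
      push_neg at hcon
      obtain ⟨α₀, hα₀⟩ := Complex.exists_root (f := f) (by
        rw [Polynomial.degree_eq_natDegree hfne, hdf]
        exact_mod_cast Nat.succ_pos n)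
      have hmem : ∀ k : ℕ, f.IsRoot (α₀ + k * κ) := by
        intro k
        induction k with
        | zero => simpa using hα₀
        | succ k ihk =>
          have := hcon _ ihk
          have heq : α₀ + (↑(k + 1) : ℂ) * κ = α₀ + ↑k * κ + κ := by push_cast; ring
          rwa [heq]
      have hinj : Function.Injective (fun k : ℕ => α₀ + k * κ) := by
        intro j k hjk
        simp only [add_right_inj] at hjk
        have : (j : ℂ) = k := mul_right_cancel₀ hκ hjk
        exact_mod_cast this
      exact (Polynomial.finite_setOf_isRoot hfne).not_infinite
        (Set.infinite_of_injective_forall_mem hinj (fun k => hmem k))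
    obtain ⟨α, hα, hα'⟩ := hroot
    -- ftilde also has α as root
    have hfte : ftilde.IsRoot α := by
      have := congrArg (Polynomial.eval α) h
      simp only [Polynomial.eval_mul, Polynomial.eval_comp, Polynomial.eval_add,
        Polynomial.eval_X, Polynomial.eval_C, hα.eq_zero, zero_mul] at this
      rcases mul_eq_zero.mp this.symm with h1 | h1
      · exact h1
      · exact absurd h1 hα'
    obtain ⟨f₁, hf₁⟩ := (Polynomial.dvd_iff_isRoot.mpr hα)
    obtain ⟨ft₁, hft₁⟩ := (Polynomial.dvd_iff_isRoot.mpr hfte)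
    have hXmonic : (X - C α).Monic := Polynomial.monic_X_sub_C α
    have hf₁m : f₁.Monic := hXmonic.of_mul_monic_left (hf₁ ▸ hf)
    have hft₁m : ft₁.Monic := hXmonic.of_mul_monic_left (hft₁ ▸ hft)
    have hdeg1 : f₁.natDegree = n := by
      have := hdf
      rw [hf₁, Polynomial.natDegree_mul (Polynomial.X_sub_C_ne_zero α) hf₁m.ne_zero,
        Polynomial.natDegree_X_sub_C] at this
      omega
    have hdeg2 : ft₁.natDegree = n := by
      have := hdft
      rw [hft₁, Polynomial.natDegree_mul (Polynomial.X_sub_C_ne_zero α) hft₁m.ne_zero,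
        Polynomial.natDegree_X_sub_C] at this
      omega
    -- cancel common factors in h
    have hcomp : (X - C α).comp (X + C κ) = X - C (α - κ) := by
      simp [Polynomial.sub_comp, Polynomial.map_sub]
      ring
    have key : f₁ * ft₁.comp (X + C κ) = ft₁ * f₁.comp (X + C κ) := by
      have h' : (X - C α) * ((X - C (α - κ))) * (f₁ * ft₁.comp (X + C κ))
          = (X - C α) * ((X - C (α - κ))) * (ft₁ * f₁.comp (X + C κ)) := by
        rw [hf₁, hft₁] at h
        simp only [Polynomial.mul_comp, hcomp] at h
        linear_combination h
      have hne : (X - C α) * (X - C (α - κ)) ≠ (0 : Polynomial ℂ) :=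
        mul_ne_zero (Polynomial.X_sub_C_ne_zero α) (Polynomial.X_sub_C_ne_zero _)
      exact mul_left_cancel₀ hne h'
    have := ih f₁ ft₁ hf₁m hft₁m hdeg1 hdeg2 key
    rw [hf₁, hft₁, this]
end

section
/- For n = m = 1 and κ = 1 (in shifted coordinates u = x - 1/2, v = y + 1/2), the polynomials I_1 = u + v, I_2 = u² + v², and I_3 = u((u-v)² - 1) satisfy: I(t, t+1) = I(t+1, t) for all t ∈ ℂ. Moreover, I_3 is not a symmetric polynomial in u, v, and I_3 separates the points (u,v) and (v,u) whenever (u-v)((u-v)²-1) ≠ 0. -/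
theorem invariants_kappa_one
    (I₁ I₂ I₃ : ℂ → ℂ → ℂ)
    (h₁ : I₁ = fun u v => u + v)
    (h₂ : I₂ = fun u v => u ^ 2 + v ^ 2)
    (h₃ : I₃ = fun u v => u * ((u - v) ^ 2 - 1)) :
    (∀ t : ℂ, I₁ t (t + 1) = I₁ (t + 1) t ∧ I₂ t (t + 1) = I₂ (t + 1) t ∧
      I₃ t (t + 1) = I₃ (t + 1) t) ∧
    (∃ u v : ℂ, I₃ u v ≠ I₃ v u) ∧
    (∀ u v : ℂ, (u - v) * ((u - v) ^ 2 - 1) ≠ 0 → I₃ u v ≠ I₃ v u) := by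
  subst h₁ h₂ h₃
  refine ⟨fun t => ⟨by ring, by ring, by ring⟩, ⟨2, 0, by norm_num⟩, ?_⟩
  intro u v h hne
  simp only [] at hne
  apply h
  have : u * ((u - v) ^ 2 - 1) - v * ((v - u) ^ 2 - 1) = (u - v) * ((u - v) ^ 2 - 1) := by
    ring
  rw [← this, hne, sub_self]
end

section
/- Let κ ∈ ℂ be nonzero and not of the form -p/q with 1 ≤ p ≤ m, 1 ≤ q ≤ n. Then the polynomial ring ℂ[x_1,...,x_n, y_1,...,y_m] is a finitely generated module over its subalgebra A generated by the n+m deformed power sums p_l(x,y,κ) = κ Σ_{i=1}^n x_i^l + Σ_{j=1}^m y_j^l, l = 1, ..., n+m. -/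
open MvPolynomial

lemma aux_vdm (K : ℕ) (Z : Finset ℂ) (h0 : (0:ℂ) ∉ Z) (hcard : Z.card ≤ K)
    (a : ℂ → ℂ) (h : ∀ l ∈ Finset.Icc 1 K, ∑ z ∈ Z, a z * z ^ l = 0) :
    ∀ z ∈ Z, a z = 0 := by
  classical
  set r := Z.card with hr
  set e : Fin r ≃ {x // x ∈ Z} := Z.equivFin.symm with he
  set zf : Fin r → ℂ := fun i => (e i : ℂ) with hzf
  have hzf_inj : Function.Injective zf := fun i j hij => e.injective (Subtype.ext hij)
  have hne : ∀ i, zf i ≠ 0 := fun i hz => h0 (hz ▸ (e i).2)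
  set M := Matrix.vandermonde zf with hM
  have hdet : M.det ≠ 0 := by
    rw [hM, Matrix.det_vandermonde]
    refine Finset.prod_ne_zero_iff.2 fun i _ => Finset.prod_ne_zero_iff.2 fun j hj => ?_
    have hij : i < j := Finset.mem_Ioi.1 hj
    exact sub_ne_zero_of_ne fun hEq => absurd (hzf_inj hEq.symm) (Nat.ne_of_lt hij ∘ congrArg Fin.val)
  have hw : Matrix.vecMul (fun i => a (zf i) * zf i) M = 0 := by
    funext j
    have h1 : ∑ i : Fin r, a (zf i) * zf i ^ ((j:ℕ)+1) = ∑ z ∈ Z, a z * z ^ ((j:ℕ)+1) := by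
      rw [← Finset.sum_coe_sort Z (fun z => a z * z ^ ((j:ℕ)+1))]
      exact Equiv.sum_comp e (fun z => a (z:ℂ) * (z:ℂ) ^ ((j:ℕ)+1))
    have h2 : ∑ z ∈ Z, a z * z ^ ((j:ℕ)+1) = 0 := by
      apply h
      simp only [Finset.mem_Icc]
      omega
    simp only [Matrix.vecMul, dotProduct, hM, Matrix.vandermonde, Pi.zero_apply]
    rw [← h2, ← h1]
    apply Finset.sum_congr rfl
    intro i _
    simp only [Matrix.of_apply]
    ring
  have hzero := Matrix.eq_zero_of_vecMul_eq_zero hdet hw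
  intro z hz
  have hkey := congrFun hzero (Z.equivFin ⟨z, hz⟩)
  have hez : zf (Z.equivFin ⟨z, hz⟩) = z := by
    simp [hzf, he]
  rw [hez] at hkey
  simp only [Pi.zero_apply] at hkey
  rcases mul_eq_zero.1 hkey with h' | h'
  · exact h'
  · exact absurd h' (fun hh => h0 (hh ▸ hz))

lemma aux_group {ι : Type} [Fintype ι] (Z : Finset ℂ) (u : ι → ℂ)
    (hu : ∀ i, u i ≠ 0 → u i ∈ Z) (l : ℕ) (hl : 1 ≤ l) :
    ∑ i, u i ^ l = ∑ z ∈ Z, ((Finset.univ.filter fun i => u i = z).card : ℂ) * z ^ l := by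
  classical
  have h1 : ∑ i, u i ^ l = ∑ i ∈ Finset.univ.filter (fun i => u i ∈ Z), u i ^ l := by
    rw [Finset.sum_filter]
    apply Finset.sum_congr rfl
    intro i _
    by_cases hi : u i ∈ Z
    · rw [if_pos hi]
    · rw [if_neg hi]
      have h0 : u i = 0 := by by_contra h'; exact hi (hu i h')
      rw [h0, zero_pow (by omega)]
  rw [h1, ← Finset.sum_fiberwise_of_maps_to (g := u) (t := Z)
    (fun i hi => (Finset.mem_filter.1 hi).2)]
  apply Finset.sum_congr rfl
  intro z hz
  have hfil : ((Finset.univ.filter (fun i => u i ∈ Z)).filter (fun i => u i = z))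
      = Finset.univ.filter fun i => u i = z := by
    ext i
    simp only [Finset.mem_filter, Finset.mem_univ, true_and]
    exact ⟨fun h => h.2, fun h => ⟨h ▸ hz, h⟩⟩
  rw [hfil]
  rw [Finset.sum_congr rfl (fun i hi => by rw [(Finset.mem_filter.1 hi).2] :
    ∀ i ∈ Finset.univ.filter fun i => u i = z, u i ^ l = z ^ l)]
  rw [Finset.sum_const, nsmul_eq_mul]

lemma aux_zero_root (n m : ℕ) (κ : ℂ) (hκ : κ ≠ 0)
    (hspec : ∀ p q : ℕ, 1 ≤ p → p ≤ m → 1 ≤ q → q ≤ n → κ ≠ -((p : ℂ) / (q : ℂ)))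
    (v : Fin n ⊕ Fin m → ℂ)
    (h : ∀ l ∈ Finset.Icc 1 (n + m),
      κ * ∑ i : Fin n, v (Sum.inl i) ^ l + ∑ j : Fin m, v (Sum.inr j) ^ l = 0) :
    v = 0 := by
  classical
  set Z : Finset ℂ := (Finset.univ.image v).erase 0 with hZ
  have h0 : (0:ℂ) ∉ Z := Finset.notMem_erase _ _
  set cn : ℂ → ℕ := fun z => (Finset.univ.filter fun i : Fin n => v (Sum.inl i) = z).card
    with hcn
  set cm : ℂ → ℕ := fun z => (Finset.univ.filter fun j : Fin m => v (Sum.inr j) = z).card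
    with hcm
  set a : ℂ → ℂ := fun z => κ * cn z + cm z with ha
  have hmemn : ∀ i : Fin n, v (Sum.inl i) ≠ 0 → v (Sum.inl i) ∈ Z := fun i hi =>
    Finset.mem_erase.2 ⟨hi, Finset.mem_image.2 ⟨Sum.inl i, Finset.mem_univ _, rfl⟩⟩
  have hmemm : ∀ j : Fin m, v (Sum.inr j) ≠ 0 → v (Sum.inr j) ∈ Z := fun j hj =>
    Finset.mem_erase.2 ⟨hj, Finset.mem_image.2 ⟨Sum.inr j, Finset.mem_univ _, rfl⟩⟩
  have key : ∀ z ∈ Z, a z = 0 := by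
    apply aux_vdm (n + m) Z h0
    · calc Z.card ≤ (Finset.univ.image v).card := Finset.card_erase_le
        _ ≤ (Finset.univ : Finset (Fin n ⊕ Fin m)).card := Finset.card_image_le
        _ = n + m := by simp
    · intro l hl
      have hl1 : 1 ≤ l := (Finset.mem_Icc.1 hl).1
      have e1 := aux_group Z (fun i : Fin n => v (Sum.inl i)) hmemn l hl1
      have e2 := aux_group Z (fun j : Fin m => v (Sum.inr j)) hmemm l hl1
      have := h l hl
      rw [e1, e2] at this
      rw [← this, Finset.mul_sum, ← Finset.sum_add_distrib]
      apply Finset.sum_congr rfl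
      intro z _
      simp only [ha, hcn, hcm]
      ring
  funext s
  show v s = 0
  by_contra hs
  have hz : v s ∈ Z := Finset.mem_erase.2 ⟨hs, Finset.mem_image.2 ⟨s, Finset.mem_univ _, rfl⟩⟩
  have haz := key _ hz
  simp only [ha] at haz
  rcases Nat.eq_zero_or_pos (cn (v s)) with hq | hq
  · have hcm0 : (cm (v s) : ℂ) = 0 := by rw [hq] at haz; simpa using haz
    have hcm0' : cm (v s) = 0 := by exact_mod_cast hcm0
    cases s with
    | inl i =>
        have : i ∈ Finset.univ.filter fun i' : Fin n => v (Sum.inl i') = v (Sum.inl i) := by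
          simp
        have hpos : 0 < cn (v (Sum.inl i)) := Finset.card_pos.2 ⟨i, this⟩
        omega
    | inr j =>
        have : j ∈ Finset.univ.filter fun j' : Fin m => v (Sum.inr j') = v (Sum.inr j) := by
          simp
        have hpos : 0 < cm (v (Sum.inr j)) := Finset.card_pos.2 ⟨j, this⟩
        omega
  · have hqn : cn (v s) ≤ n := le_trans (Finset.card_filter_le _ _) (by simp)
    have hqne : (cn (v s) : ℂ) ≠ 0 := Nat.cast_ne_zero.2 (by omega)
    have hk : κ = -((cm (v s) : ℂ) / (cn (v s) : ℂ)) := by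
      field_simp
      linear_combination haz
    rcases Nat.eq_zero_or_pos (cm (v s)) with hp | hp
    · rw [hp] at hk
      simp at hk
      exact hκ hk
    · have hpm : cm (v s) ≤ m := le_trans (Finset.card_filter_le _ _) (by simp)
      exact hspec (cm (v s)) (cn (v s)) hp hpm hq hqn hk

lemma aux_degree_add {σ : Type} (u w : σ →₀ ℕ) : (u + w).degree = u.degree + w.degree := by
  simp [Finsupp.degree_eq_weight_one, map_add]

lemma aux_hc_mul {σ : Type} (p q : MvPolynomial σ ℂ) (l N : ℕ) (hq : q.IsHomogeneous l)
    (hl : l ≤ N) :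
    homogeneousComponent N (p * q) = homogeneousComponent (N - l) p * q := by
  classical
  ext d
  rw [coeff_homogeneousComponent, coeff_mul, coeff_mul]
  have hterm : ∀ x ∈ Finset.HasAntidiagonal.antidiagonal d,
      coeff x.1 (homogeneousComponent (N - l) p) * coeff x.2 q
        = if d.degree = N then coeff x.1 p * coeff x.2 q else 0 := by
    intro x hx
    have hxd : x.1 + x.2 = d := Finset.HasAntidiagonal.mem_antidiagonal.1 hx
    rw [coeff_homogeneousComponent]
    by_cases hq2 : coeff x.2 q = 0
    · simp [hq2]
    · have hdeg2 : x.2.degree = l := by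
        have := hq hq2
        rwa [Finsupp.degree_eq_weight_one]
      have hdd : d.degree = x.1.degree + l := by
        rw [← hxd, aux_degree_add, hdeg2]
      by_cases h1 : x.1.degree = N - l
      · have : d.degree = N := by omega
        rw [if_pos h1, if_pos this]
      · have : d.degree ≠ N := by omega
        rw [if_neg h1, if_neg this, zero_mul]
  rw [Finset.sum_congr rfl hterm]
  by_cases hd : d.degree = N
  · simp [hd]
  · simp [hd]

lemma aux_degree_single {σ : Type} (s : σ) (N : ℕ) : (Finsupp.single s N).degree = N := by
  classical
  rw [Finsupp.degree]
  by_cases hN : N = 0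
  · simp [hN]
  · exact Finsupp.degree_single s N
theorem module_finite_over_deformed_power_sums (n m : ℕ) (hn : 0 < n) (hm : 0 < m)
    (κ : ℂ) (hκ : κ ≠ 0)
    (hspec : ∀ p q : ℕ, 1 ≤ p → p ≤ m → 1 ≤ q → q ≤ n → κ ≠ -((p : ℂ) / (q : ℂ))) :
    Module.Finite
      (Algebra.adjoin ℂ
        {P : MvPolynomial (Fin n ⊕ Fin m) ℂ |
          ∃ l ∈ Finset.Icc 1 (n + m),
            P = C κ * (∑ i : Fin n, X (Sum.inl i) ^ l) + ∑ j : Fin m, X (Sum.inr j) ^ l})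
      (MvPolynomial (Fin n ⊕ Fin m) ℂ) := by
  classical
  set pl : ℕ → MvPolynomial (Fin n ⊕ Fin m) ℂ := fun l =>
    C κ * (∑ i : Fin n, X (Sum.inl i) ^ l) + ∑ j : Fin m, X (Sum.inr j) ^ l with hpl
  set Sbig : Set (MvPolynomial (Fin n ⊕ Fin m) ℂ) :=
    {P | ∃ l ∈ Finset.Icc 1 (n + m),
      P = C κ * (∑ i : Fin n, X (Sum.inl i) ^ l) + ∑ j : Fin m, X (Sum.inr j) ^ l}
    with hSbig
  set A := Algebra.adjoin ℂ Sbig with hA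
  constructor
  have hplS : ∀ l ∈ Finset.Icc 1 (n + m), pl l ∈ Sbig := fun l hl => ⟨l, hl, rfl⟩
  have hplhom : ∀ l, (pl l).IsHomogeneous l := by
    intro l
    apply MvPolynomial.IsHomogeneous.add
    · exact (MvPolynomial.IsHomogeneous.sum _ _ _ fun i _ =>
        isHomogeneous_X_pow _ _).C_mul κ
    · exact MvPolynomial.IsHomogeneous.sum _ _ _ fun j _ => isHomogeneous_X_pow _ _
  set I : Ideal (MvPolynomial (Fin n ⊕ Fin m) ℂ) := Ideal.span Sbig with hI
  have hroots : MvPolynomial.zeroLocus ℂ I ⊆ {0} := by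
    intro v hv
    have hv' : ∀ l ∈ Finset.Icc 1 (n + m),
        κ * ∑ i : Fin n, v (Sum.inl i) ^ l + ∑ j : Fin m, v (Sum.inr j) ^ l = 0 := by
      intro l hl
      have h1 : eval v (pl l) = 0 :=
        (MvPolynomial.mem_zeroLocus_iff.1 hv) _ (Ideal.subset_span (hplS l hl))
      simpa [hpl] using h1
    exact aux_zero_root n m κ hκ hspec v hv'
  have hrad : ∀ s : Fin n ⊕ Fin m, ∃ N : ℕ,
      (X s : MvPolynomial (Fin n ⊕ Fin m) ℂ) ^ N ∈ I := by
    intro s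
    have hx : (X s : MvPolynomial (Fin n ⊕ Fin m) ℂ) ∈ I.radical := by
      rw [← MvPolynomial.vanishingIdeal_zeroLocus_eq_radical (K := ℂ)]
      rw [MvPolynomial.mem_vanishingIdeal_iff]
      intro v hv
      have hv0 : v = 0 := hroots hv
      simp [hv0]
    exact Ideal.mem_radical_iff.1 hx
  choose Ns hNs using hrad
  set N : ℕ := (n + m + 1) + Finset.univ.sup Ns with hN
  have hNl : ∀ l ∈ Finset.Icc 1 (n + m), l ≤ N := by
    intro l hl
    have := (Finset.mem_Icc.1 hl).2
    omega
  have hXN : ∀ s, (X s : MvPolynomial (Fin n ⊕ Fin m) ℂ) ^ N ∈ I := by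
    intro s
    have h1 : Ns s ≤ N := by
      have := Finset.le_sup (f := Ns) (Finset.mem_univ s)
      omega
    have h2 : (X s : MvPolynomial (Fin n ⊕ Fin m) ℂ) ^ N
        = (X s) ^ (N - Ns s) * (X s) ^ (Ns s) := by
      rw [← pow_add]
      congr 1
      omega
    rw [h2]
    exact I.mul_mem_left _ (hNs s)
  have hSrange : Sbig = Set.range (fun l : ↥(Finset.Icc 1 (n + m)) => pl (l : ℕ)) := by
    ext P
    constructor
    · rintro ⟨l, hl, rfl⟩; exact ⟨⟨l, hl⟩, rfl⟩
    · rintro ⟨⟨l, hl⟩, rfl⟩; exact ⟨l, hl, rfl⟩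
  have hrep : ∀ s : Fin n ⊕ Fin m, ∃ c : ↥(Finset.Icc 1 (n + m)) →
      MvPolynomial (Fin n ⊕ Fin m) ℂ,
      (X s) ^ N = ∑ l, c l * pl (l : ℕ) ∧ ∀ l, (c l).totalDegree ≤ N - (l : ℕ) := by
    intro s
    have hmem : (X s : MvPolynomial (Fin n ⊕ Fin m) ℂ) ^ N
        ∈ Ideal.span (Set.range fun l : ↥(Finset.Icc 1 (n + m)) => pl (l : ℕ)) := by
      rw [← hSrange]; exact hXN s
    obtain ⟨c, hc⟩ := Ideal.mem_span_range_iff_exists_fun.1 hmem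
    refine ⟨fun l => homogeneousComponent (N - (l : ℕ)) (c l), ?_, fun l =>
      (homogeneousComponent_isHomogeneous _ _).totalDegree_le⟩
    have h2 := congrArg (homogeneousComponent N) hc
    rw [map_sum] at h2
    calc (X s : MvPolynomial (Fin n ⊕ Fin m) ℂ) ^ N
        = homogeneousComponent N ((X s) ^ N) := by
          rw [homogeneousComponent_of_mem
            ((mem_homogeneousSubmodule _ _).2 (isHomogeneous_X_pow s N)), if_pos rfl]
      _ = ∑ l, homogeneousComponent N (c l * pl (l : ℕ)) := h2.symm
      _ = ∑ l : ↥(Finset.Icc 1 (n + m)),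
            homogeneousComponent (N - (l : ℕ)) (c l) * pl (l : ℕ) :=
          Finset.sum_congr rfl fun l _ => aux_hc_mul _ _ _ _ (hplhom (l : ℕ)) (hNl _ l.2)
  set D : ℕ := (n + m) * (N - 1) + 1 with hD
  have hpigeon : ∀ d : (Fin n ⊕ Fin m) →₀ ℕ, D ≤ d.degree → ∃ s, N ≤ d s := by
    intro d hd
    by_contra hcon
    push_neg at hcon
    have h1 : d.degree = ∑ s : Fin n ⊕ Fin m, d s := by
      rw [Finsupp.degree]
      exact Finset.sum_subset (Finset.subset_univ _)
        (fun s _ hs => by simpa using Finsupp.notMem_support_iff.1 hs)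
    have h2 : ∑ s : Fin n ⊕ Fin m, d s ≤ ∑ _s : Fin n ⊕ Fin m, (N - 1) :=
      Finset.sum_le_sum fun s _ => by have := hcon s; omega
    have h3 : ∑ _s : Fin n ⊕ Fin m, (N - 1) = (n + m) * (N - 1) := by
      simp [Finset.sum_const, Finset.card_univ, mul_comm]
    omega
  set T : Set (MvPolynomial (Fin n ⊕ Fin m) ℂ) :=
    (fun d : (Fin n ⊕ Fin m) →₀ ℕ => (monomial d (1 : ℂ))) '' {d | d.degree < D} with hT
  have hTfin : T.Finite := by
    apply Set.Finite.image
    apply Set.Finite.subset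
      (Finset.Iic (Finsupp.equivFunOnFinite.symm fun _ : Fin n ⊕ Fin m => D)).finite_toSet
    intro d hd
    simp only [Finset.coe_Iic, Set.mem_Iic]
    rw [Finsupp.le_def]
    intro s
    have h1 : d s ≤ d.degree := Finsupp.le_degree s d
    have h2 : d.degree < D := hd
    simp only [Finsupp.coe_equivFunOnFinite_symm]
    omega
  have hsmul : ∀ (a : ↥A) (x : MvPolynomial (Fin n ⊕ Fin m) ℂ), a • x = (a : _) * x :=
    fun a x => rfl
  have main : ∀ k : ℕ, ∀ f : MvPolynomial (Fin n ⊕ Fin m) ℂ, f.totalDegree ≤ k →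
      f ∈ Submodule.span A T := by
    intro k
    induction k using Nat.strong_induction_on with
    | _ k IH =>
      intro f hf
      rw [MvPolynomial.as_sum f]
      apply Submodule.sum_mem
      intro d hd
      have hdk : d.degree ≤ k := by
        have h1 : d.sum (fun _ e => e) ≤ f.totalDegree := MvPolynomial.le_totalDegree hd
        have h2 : d.sum (fun _ e => e) = d.degree := rfl
        omega
      have hCmem : C (coeff d f) ∈ A := by
        rw [hA]
        exact Subalgebra.algebraMap_mem _ (coeff d f)
      have hmono : (monomial d (coeff d f))
          = (⟨C (coeff d f), hCmem⟩ : ↥A) • (monomial d (1 : ℂ)) := by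
        rw [hsmul]
        simp [C_mul_monomial]
      rw [hmono]
      apply Submodule.smul_mem
      -- now: monomial d 1 ∈ span
      by_cases hdD : d.degree < D
      · exact Submodule.subset_span ⟨d, hdD, rfl⟩
      · push_neg at hdD
        obtain ⟨s, hsN⟩ := hpigeon d hdD
        obtain ⟨c, hcsum, hcdeg⟩ := hrep s
        set d' : (Fin n ⊕ Fin m) →₀ ℕ := d - Finsupp.single s N with hd'
        have hle : Finsupp.single s N ≤ d := Finsupp.single_le_iff.2 hsN
        have hdd : d' + Finsupp.single s N = d := tsub_add_cancel_of_le hle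
        have hdeg' : d'.degree + N = d.degree := by
          conv_rhs => rw [← hdd]
          rw [aux_degree_add, aux_degree_single]
        have hmon : (monomial d (1 : ℂ)) = monomial d' 1 * (X s) ^ N := by
          rw [X_pow_eq_monomial, monomial_mul, mul_one, hdd]
        have hNd : N ≤ d.degree := by omega
        rw [hmon, hcsum, Finset.mul_sum]
        apply Submodule.sum_mem
        intro l _
        have hl1 : 1 ≤ (l : ℕ) := (Finset.mem_Icc.1 l.2).1
        have hlN : (l : ℕ) ≤ N := hNl _ l.2
        have hdegg : (monomial d' (1 : ℂ) * (c l * pl (l : ℕ))) =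
            pl (l : ℕ) * (monomial d' 1 * c l) := by ring
        rw [hdegg]
        have hgdeg : (monomial d' (1 : ℂ) * c l).totalDegree ≤ k - 1 := by
          have h1 := MvPolynomial.totalDegree_mul (monomial d' (1 : ℂ)) (c l)
          have h2 : (monomial d' (1 : ℂ)).totalDegree = d'.degree := by
            rw [MvPolynomial.totalDegree_monomial _ (one_ne_zero)]
            rfl
          have h3 := hcdeg l
          have hD1 : 1 ≤ D := by omega
          omega
        have hg : (monomial d' (1 : ℂ) * c l) ∈ Submodule.span A T := by
          have hk1 : k - 1 < k := by omega
          exact IH (k - 1) hk1 _ hgdeg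
        have hplA : pl (l : ℕ) ∈ A := by
          rw [hA]
          exact Algebra.subset_adjoin (hplS _ l.2)
        have := Submodule.smul_mem (Submodule.span A T) (⟨pl (l : ℕ), hplA⟩ : ↥A) hg
        rwa [hsmul] at this
  refine ⟨hTfin.toFinset, ?_⟩
  rw [Set.Finite.coe_toFinset, eq_top_iff]
  intro f _
  exact main f.totalDegree f le_rfl
end
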